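/- Let M be a positive integer, f : ℤ → ℂ an M-periodic function, F₀(t) = (Σ_{ℓ=1}^{M} f(ℓ) e^{-ℓt})/(1 - e^{-Mt}) its meromorphic generating function, and t_n := 2πi n/M for n ∈ ℤ. Then for every n ∈ ℤ: lim_{t→t_n} (t - t_n) · (F₀(t) + F₀(-t))/2 = M^{-1/2} (U_M f)^{od}(n) and lim_{t→t_n} (t - t_n) · (F₀(t) - F₀(-t))/2 = M^{-1/2} (U_M f)^{ev}(n), i.e. the residue of the even part of F₀ at t_n is M^{-1/2} f̂^{od}(n) and the residue of the odd part of F₀ at t_n is M^{-1/2} f̂^{ev}(n). -/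

import Mathlib

/-!
Write `F₀ = N / D` with `D(t) = 1 - e^{-Mt}`. The denominator vanishes at `t_n = 2πin/M` with
`D'(t_n) = M`, so the residue of `F₀` at `t_n` is `N(t_n) / M`; by periodicity of `f` the sum
`N(t_n)` over `1 ≤ ℓ ≤ M` is the DFT sum over `0 ≤ ℓ < M`, giving `M^{-1/2} f̂(n)`. Reflecting
`t ↦ -t` maps the pole at `t_{-n} = -t_n` to `t_n`, so `t ↦ F₀(-t)` has residue `-M^{-1/2} f̂(-n)`
there, and the residues of the even and odd parts follow by linearity.
-/

open Complex Filter

/-- The discrete Fourier transform of an `M`-periodic function `f : ℤ → ℂ`. -/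
noncomputable def dft (M : ℕ) (f : ℤ → ℂ) (n : ℤ) : ℂ :=
  (Real.sqrt M : ℂ)⁻¹ * ∑ ℓ ∈ Finset.range M, f ℓ *
    Complex.exp (-2 * Real.pi * Complex.I * ℓ * n / M)

open Topology

theorem Finset.sum_Icc_one_eq_sum_range {β : Type*} [AddCancelCommMonoid β] {g : ℕ → β} {M : ℕ}
    (hg : g M = g 0) : ∑ ℓ ∈ Icc 1 M, g ℓ = ∑ ℓ ∈ range M, g ℓ := by
  have h := sum_range_succ_comm g M
  rw [sum_range_eq_add_Ico g M.succ_pos, Nat.succ_eq_add_one, Ico_add_one_right_eq_Icc, hg] at h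
  exact add_left_cancel h

theorem tendsto_sub_mul_div_of_hasDerivAt {𝕜 : Type*} [NontriviallyNormedField 𝕜] {g h : 𝕜 → 𝕜}
    {c h' : 𝕜} (hg : ContinuousAt g c) (hh : HasDerivAt h h' c) (hc : h c = 0) (hh' : h' ≠ 0) :
    Tendsto (fun t => (t - c) * (g t / h t)) (𝓝[≠] c) (𝓝 (g c / h')) := by
  have hslope : Tendsto (fun t => h t / (t - c)) (𝓝[≠] c) (𝓝 h') :=
    hh.tendsto_slope.congr fun t => by rw [slope_def_field, hc, sub_zero]
  rw [div_eq_mul_inv]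
  refine ((hg.tendsto.mono_left nhdsWithin_le_nhds).mul (hslope.inv₀ hh')).congr fun t => ?_
  rw [inv_div]
  ring

/-- The paper's `F₀`. -/
noncomputable def periodicGenFun (M : ℕ) (f : ℤ → ℂ) (t : ℂ) : ℂ :=
  (∑ ℓ ∈ Finset.Icc 1 M, f ℓ * exp (-(ℓ : ℂ) * t)) / (1 - exp (-(M : ℂ) * t))

theorem exp_neg_natCast_mul_two_pi_I_mul_div {M : ℕ} (hM : M ≠ 0) (n : ℤ) :
    exp (-(M : ℂ) * (2 * Real.pi * I * n / M)) = 1 := by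
  have hMC : (M : ℂ) ≠ 0 := Nat.cast_ne_zero.2 hM
  rw [show -(M : ℂ) * (2 * Real.pi * I * n / M) = (-n : ℤ) * (2 * Real.pi * I) by
    push_cast; field_simp]
  exact exp_int_mul_two_pi_mul_I _

theorem inv_sqrt_mul_dft {M : ℕ} (f : ℤ → ℂ) (hf : f M = f 0) (n : ℤ) :
    (Real.sqrt M : ℂ)⁻¹ * dft M f n =
      (∑ ℓ ∈ Finset.Icc 1 M, f ℓ * exp (-(ℓ : ℂ) * (2 * Real.pi * I * n / M))) / M := by
  rcases eq_or_ne M 0 with rfl | hM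
  · simp
  rw [Finset.sum_Icc_one_eq_sum_range, dft, ← mul_assoc, ← mul_inv, div_eq_inv_mul]
  · congr 1
    · rw [← ofReal_mul, Real.mul_self_sqrt M.cast_nonneg, ofReal_natCast]
    · refine Finset.sum_congr rfl fun ℓ _ => ?_
      ring_nf
  · rw [exp_neg_natCast_mul_two_pi_I_mul_div hM]
    simp [hf]

theorem tendsto_sub_mul_periodicGenFun {M : ℕ} (hM : 0 < M) {f : ℤ → ℂ} (hf : f M = f 0) (n : ℤ) :
    Tendsto (fun t => (t - 2 * Real.pi * I * n / M) * periodicGenFun M f t)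
      (𝓝[≠] (2 * Real.pi * I * n / M)) (𝓝 ((Real.sqrt M : ℂ)⁻¹ * dft M f n)) := by
  rw [inv_sqrt_mul_dft f hf]
  refine tendsto_sub_mul_div_of_hasDerivAt (by fun_prop) ?_
    (by rw [exp_neg_natCast_mul_two_pi_I_mul_div hM.ne', sub_self]) (Nat.cast_ne_zero.2 hM.ne')
  have hd := (((hasDerivAt_id (2 * Real.pi * I * n / M)).const_mul (-(M : ℂ))).cexp).const_sub 1
  refine hd.congr_deriv ?_
  rw [id_eq, exp_neg_natCast_mul_two_pi_I_mul_div hM.ne']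
  ring

theorem statement4 (M : ℕ) (hM : 0 < M) (f : ℤ → ℂ) (hf : ∀ n : ℤ, f (n + M) = f n)
    (G : ℂ → ℂ)
    (hG : ∀ t : ℂ, G t =
      (∑ ℓ ∈ Finset.Icc 1 M, f ℓ * Complex.exp (-(ℓ : ℂ) * t)) /
        (1 - Complex.exp (-(M : ℂ) * t)))
    (n : ℤ) :
    Filter.Tendsto
      (fun t : ℂ => (t - 2 * Real.pi * Complex.I * n / M) * ((G t + G (-t)) / 2))
      (nhdsWithin (2 * Real.pi * Complex.I * n / M) {(2 * Real.pi * Complex.I * n / M : ℂ)}ᶜ)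
      (nhds ((Real.sqrt M : ℂ)⁻¹ * ((dft M f n - dft M f (-n)) / 2))) ∧
    Filter.Tendsto
      (fun t : ℂ => (t - 2 * Real.pi * Complex.I * n / M) * ((G t - G (-t)) / 2))
      (nhdsWithin (2 * Real.pi * Complex.I * n / M) {(2 * Real.pi * Complex.I * n / M : ℂ)}ᶜ)
      (nhds ((Real.sqrt M : ℂ)⁻¹ * ((dft M f n + dft M f (-n)) / 2))) := by
  obtain rfl : G = periodicGenFun M f := funext hG
  have hfM : f M = f 0 := by simpa using hf 0
  have hres := tendsto_sub_mul_periodicGenFun hM hfM n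
  set c : ℂ := 2 * Real.pi * I * n / M
  have hres_refl : Tendsto (fun t => (t - c) * periodicGenFun M f (-t)) (𝓝[≠] c)
      (𝓝 (-((Real.sqrt M : ℂ)⁻¹ * dft M f (-n)))) := by
    have hneg : Tendsto Neg.neg (𝓝[≠] c) (𝓝[≠] (2 * Real.pi * I * (-n : ℤ) / M)) := by
      rw [show (2 * Real.pi * I * (-n : ℤ) / M : ℂ) = -c by push_cast; ring, ← Filter.neg_nhdsNE]
      exact tendsto_map
    refine ((tendsto_sub_mul_periodicGenFun hM hfM (-n)).comp hneg).neg.congr fun t => ?_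
    simp only [Function.comp_apply, c]
    push_cast
    ring
  constructor
  · convert (hres.add hres_refl).div_const 2 using 2 <;> ring
  · convert (hres.sub hres_refl).div_const 2 using 2 <;> ring
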